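/- arXiv:2605.13812 — 4 statements merged into one kernel-verified Lean document; each statement's English description precedes it below -/
import Mathlib

section
/- Let m be a positive integer and let Q be an m×m real symmetric matrix that is negative definite, irreducible, and has nonnegative off-diagonal entries (Q i j ≥ 0 for all i ≠ j). Let A = Q⁻¹ and define the quadratic form F(V) = Vᵀ A V for V ∈ ℝ^m. Fix W ∈ ℝ^m with all entries nonnegative. Then for every V ∈ ℝ^m satisfying |V i| ≤ W i for every index i, one has F(W) ≤ F(V); that is, F restricted to the box D_W = {V : |V i| ≤ W i for all i} attains its minimum at W. -/
open Matrix

/-- An `m × m` real matrix is irreducible if there is no nonempty proper subset `S`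
of the index set such that `Q i j = 0` for all `i ∈ S` and `j ∉ S`. -/
def Matrix.IsIrreducible' {m : ℕ} (Q : Matrix (Fin m) (Fin m) ℝ) : Prop :=
  ¬ ∃ S : Set (Fin m), S.Nonempty ∧ S ≠ Set.univ ∧ ∀ i ∈ S, ∀ j ∉ S, Q i j = 0

/-!
`-Q` is a nonsingular M-matrix, so `A = Q⁻¹` is entrywise nonpositive: if `Q x ≥ 0`, pairing
`Q x` with `x⁺` gives `0 ≤ x⁺ᵀ Q x⁺ - x⁺ᵀ Q x⁻`, where the second term is `≥ 0` because `x⁺` and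
`x⁻` have disjoint supports and `Q` is nonnegative off the diagonal; negative definiteness then
forces `x⁺ = 0`. With `A ≤ 0` entrywise, `F(V) = ∑ A i j * V i * V j` is minimised on the box
termwise, since `V i * V j ≤ |V i| * |V j| ≤ W i * W j`.
-/

variable {n R : Type*} [Fintype n] [CommRing R] [LinearOrder R] [IsStrictOrderedRing R]

lemma posPart_mul_negPart_eq_zero (a : R) : a⁺ * a⁻ = 0 := by
  rcases le_total a 0 with h | h
  · rw [posPart_eq_zero.2 h, zero_mul]
  · rw [negPart_eq_zero.2 h, mul_zero]

namespace Matrix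

lemma posPart_dotProduct_mulVec_negPart_nonneg {Q : Matrix n n R}
    (hoff : ∀ i j, i ≠ j → 0 ≤ Q i j) (x : n → R) : 0 ≤ x⁺ ⬝ᵥ Q *ᵥ x⁻ := by
  simp only [dotProduct, mulVec, Finset.mul_sum]
  refine Finset.sum_nonneg fun i _ => Finset.sum_nonneg fun j _ => ?_
  rcases eq_or_ne i j with rfl | hij
  · rw [Pi.posPart_apply, Pi.negPart_apply, mul_left_comm, posPart_mul_negPart_eq_zero,
      mul_zero]
  · have := hoff i j hij
    have := posPart_nonneg (x i)
    have := negPart_nonneg (x j)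
    positivity

lemma nonpos_of_mulVec_nonneg {Q : Matrix n n R} (hoff : ∀ i j, i ≠ j → 0 ≤ Q i j)
    (hneg : ∀ v : n → R, v ≠ 0 → v ⬝ᵥ Q *ᵥ v < 0) {x : n → R} (hx : 0 ≤ Q *ᵥ x) :
    x ≤ 0 := by
  by_contra hpos
  have hxpos : x⁺ ≠ 0 := by rwa [Ne, posPart_eq_zero]
  have h₁ : x⁺ ⬝ᵥ Q *ᵥ x⁺ < 0 := hneg _ hxpos
  have h₂ : 0 ≤ x⁺ ⬝ᵥ Q *ᵥ x⁻ := posPart_dotProduct_mulVec_negPart_nonneg hoff x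
  have h₃ : 0 ≤ x⁺ ⬝ᵥ Q *ᵥ x := dotProduct_nonneg_of_nonneg (posPart_nonneg x) hx
  have h₄ : x⁺ ⬝ᵥ Q *ᵥ x = x⁺ ⬝ᵥ Q *ᵥ x⁺ - x⁺ ⬝ᵥ Q *ᵥ x⁻ := by
    rw [← dotProduct_sub, ← mulVec_sub, posPart_sub_negPart]
  linarith

lemma dotProduct_mulVec_le_of_abs_le {A : Matrix n n R} (hA : ∀ i j, A i j ≤ 0)
    {V W : n → R} (hVW : ∀ i, |V i| ≤ W i) : W ⬝ᵥ A *ᵥ W ≤ V ⬝ᵥ A *ᵥ V := by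
  simp only [dotProduct, mulVec, Finset.mul_sum]
  refine Finset.sum_le_sum fun i _ => Finset.sum_le_sum fun j _ => ?_
  have hVV : V i * V j ≤ W i * W j :=
    calc V i * V j ≤ |V i| * |V j| := by rw [← abs_mul]; exact le_abs_self _
      _ ≤ W i * W j := mul_le_mul (hVW i) (hVW j) (abs_nonneg _) ((abs_nonneg _).trans (hVW i))
  linarith [mul_le_mul_of_nonpos_left hVV (hA i j)]

lemma isUnit_det_of_dotProduct_mulVec_neg {K : Type*} [Field K] [Preorder K] [DecidableEq n]
    {Q : Matrix n n K} (hneg : ∀ v : n → K, v ≠ 0 → v ⬝ᵥ Q *ᵥ v < 0) : IsUnit Q.det := by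
  rw [isUnit_iff_ne_zero]
  intro hdet
  obtain ⟨v, hv, hQv⟩ := exists_mulVec_eq_zero_iff.2 hdet
  simpa [hQv] using hneg v hv

lemma inv_apply_nonpos {K : Type*} [Field K] [LinearOrder K] [IsStrictOrderedRing K]
    [DecidableEq n] {Q : Matrix n n K} (hoff : ∀ i j, i ≠ j → 0 ≤ Q i j)
    (hneg : ∀ v : n → K, v ≠ 0 → v ⬝ᵥ Q *ᵥ v < 0) (i j : n) : Q⁻¹ i j ≤ 0 := by
  have hQ : Q * Q⁻¹ = 1 := mul_nonsing_inv Q (isUnit_det_of_dotProduct_mulVec_neg hneg)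
  have hcol : Q *ᵥ (Q⁻¹ *ᵥ Pi.single j 1) = Pi.single j 1 := by
    rw [mulVec_mulVec, hQ, one_mulVec]
  have hcol_nonpos := nonpos_of_mulVec_nonneg hoff hneg (hcol ▸ Pi.single_nonneg.2 zero_le_one) i
  simpa using hcol_nonpos

end Matrix

theorem stmt_0_general (m : ℕ) (Q : Matrix (Fin m) (Fin m) ℝ)
    (hnegdef : ∀ V : Fin m → ℝ, V ≠ 0 → V ⬝ᵥ Q.mulVec V < 0)
    (hoff : ∀ i j : Fin m, i ≠ j → 0 ≤ Q i j)
    (W : Fin m → ℝ)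
    (V : Fin m → ℝ) (hV : ∀ i, |V i| ≤ W i) :
    W ⬝ᵥ (Q⁻¹).mulVec W ≤ V ⬝ᵥ (Q⁻¹).mulVec V :=
  dotProduct_mulVec_le_of_abs_le (inv_apply_nonpos hoff hnegdef) hV

theorem stmt_0 (m : ℕ) (hm : 0 < m) (Q : Matrix (Fin m) (Fin m) ℝ)
    (hsym : Q.IsSymm)
    (hnegdef : ∀ V : Fin m → ℝ, V ≠ 0 → V ⬝ᵥ Q.mulVec V < 0)
    (hirr : Q.IsIrreducible')
    (hoff : ∀ i j : Fin m, i ≠ j → 0 ≤ Q i j)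
    (W : Fin m → ℝ) (hW : ∀ i, 0 ≤ W i)
    (V : Fin m → ℝ) (hV : ∀ i, |V i| ≤ W i) :
    W ⬝ᵥ (Q⁻¹).mulVec W ≤ V ⬝ᵥ (Q⁻¹).mulVec V :=
  stmt_0_general m Q hnegdef hoff W V hV
end

section
/- Let m be a positive integer and let Q be an m×m real symmetric matrix that is negative definite, irreducible, and has nonnegative off-diagonal entries (Q i j ≥ 0 for all i ≠ j). Let A = Q⁻¹ and define the quadratic form F(V) = Vᵀ A V for V ∈ ℝ^m. Fix W ∈ ℝ^m with all entries nonnegative. If V ∈ ℝ^m satisfies |V i| ≤ W i for every index i and F(V) = F(W), then V = W or V = −W. -/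
/-!
With `P = -Q`, a positive definite matrix with nonpositive off-diagonal entries, comparing the
quadratic forms of `x` and `|x|` shows that `P x ≥ 0` forces `x ≥ 0`; irreducibility upgrades
this to `P⁻¹` being entrywise positive. Hence every entry of `A = Q⁻¹` is negative, and
`|V| ≤ W` gives `A i k * (V i * V k) ≥ A i k * (W i * W k)` term by term. Equality of the forms
forces `V i * V k = W i * W k` for all `i, k`, which means `V = ± W`.
-/

open Matrix

/-- An `m × m` real matrix is irreducible if there is no nonempty proper subset `S`
of the index set such that `Q i j = 0` for all `i ∈ S` and `j ∉ S`. -/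
def Matrix.IsIrreducibleReal {m : ℕ} (Q : Matrix (Fin m) (Fin m) ℝ) : Prop :=
  ¬ ∃ S : Set (Fin m), S.Nonempty ∧ S ≠ Set.univ ∧ ∀ i ∈ S, ∀ j ∉ S, Q i j = 0

section

variable {n : Type*} [Fintype n]

lemma eq_or_eq_neg_of_forall_mul_eq {V W : n → ℝ} (hW : 0 ≤ W)
    (h : ∀ i k, V i * V k = W i * W k) : V = W ∨ V = -W := by
  have habs : ∀ i, |V i| = W i := fun i =>
    (abs_eq_abs.mpr (mul_self_eq_mul_self_iff.mp (h i i))).trans (abs_of_nonneg (hW i))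
  by_cases hpos : ∃ i, 0 < V i
  · obtain ⟨i, hi⟩ := hpos
    have hWi : W i = V i := by rw [← habs i, abs_of_pos hi]
    exact Or.inl <| funext fun k => mul_left_cancel₀ hi.ne' (hWi ▸ h i k)
  · simp only [not_exists, not_lt] at hpos
    exact Or.inr <| funext fun k => by
      rw [Pi.neg_apply, ← habs k, abs_of_nonpos (hpos k), neg_neg]

namespace Matrix

lemma dotProduct_mulVec_self_eq_sum (A : Matrix n n ℝ) (x : n → ℝ) :
    x ⬝ᵥ A *ᵥ x = ∑ p : n × n, A p.1 p.2 * (x p.1 * x p.2) := by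
  rw [Fintype.sum_prod_type' fun i k => A i k * (x i * x k)]
  simp only [dotProduct, mulVec, Finset.mul_sum]
  exact Finset.sum_congr rfl fun _ _ => Finset.sum_congr rfl fun _ _ => by ring

lemma abs_dotProduct_mulVec_abs_le {P : Matrix n n ℝ} (hoff : ∀ i j, i ≠ j → P i j ≤ 0)
    (x : n → ℝ) : |x| ⬝ᵥ P *ᵥ |x| ≤ x ⬝ᵥ P *ᵥ x := by
  rw [dotProduct_mulVec_self_eq_sum, dotProduct_mulVec_self_eq_sum]
  refine Finset.sum_le_sum fun ⟨i, k⟩ _ => ?_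
  change P i k * (|x i| * |x k|) ≤ P i k * (x i * x k)
  rcases eq_or_ne i k with rfl | hik
  · rw [abs_mul_abs_self]
  · rw [← abs_mul]
    exact mul_le_mul_of_nonpos_left (le_abs_self _) (hoff i k hik)

lemma PosDef.nonneg_of_mulVec_nonneg {P : Matrix n n ℝ} (hP : P.PosDef)
    (hoff : ∀ i j, i ≠ j → P i j ≤ 0) {x : n → ℝ} (hPx : 0 ≤ P *ᵥ x) : 0 ≤ x := by
  have hsymm : ∀ y z : n → ℝ, y ⬝ᵥ P *ᵥ z = z ⬝ᵥ P *ᵥ y := fun y z => by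
    rw [← dotProduct_transpose_mulVec, ← conjTranspose_eq_transpose_of_trivial, hP.isHermitian.eq]
  -- The form of `|x| - x` is positive if `x ≱ 0`, yet bounded by `2 (P x) ⬝ᵥ (x - |x|) ≤ 0`.
  by_contra hx
  have hne : |x| - x ≠ 0 := sub_ne_zero.mpr fun h => hx (h ▸ abs_nonneg x)
  have hpos : 0 < (|x| - x) ⬝ᵥ P *ᵥ (|x| - x) := by
    simpa using hP.dotProduct_mulVec_pos hne
  have hexpand : (|x| - x) ⬝ᵥ P *ᵥ (|x| - x)
      = |x| ⬝ᵥ P *ᵥ |x| - x ⬝ᵥ P *ᵥ x + 2 * (x ⬝ᵥ P *ᵥ x - |x| ⬝ᵥ P *ᵥ x) := by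
    rw [mulVec_sub, dotProduct_sub, sub_dotProduct, sub_dotProduct, hsymm x |x|]
    ring
  have hcross : x ⬝ᵥ P *ᵥ x - |x| ⬝ᵥ P *ᵥ x ≤ 0 := by
    rw [← sub_dotProduct, dotProduct_comm]
    exact Finset.sum_nonpos fun i _ =>
      mul_nonpos_of_nonneg_of_nonpos (hPx i) (sub_nonpos.mpr (le_abs_self (x i)))
  linarith [abs_dotProduct_mulVec_abs_le hoff x]

lemma forall_mul_eq_of_dotProduct_mulVec_eq {A : Matrix n n ℝ} (hA : ∀ i j, A i j < 0)
    {V W : n → ℝ} (hW : 0 ≤ W) (hV : |V| ≤ W) (heq : V ⬝ᵥ A *ᵥ V = W ⬝ᵥ A *ᵥ W) :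
    ∀ i k, V i * V k = W i * W k := by
  have hVW : ∀ i k, V i * V k ≤ W i * W k := fun i k =>
    (le_abs_self _).trans <| (abs_mul _ _).trans_le <|
      mul_le_mul (hV i) (hV k) (abs_nonneg _) (hW i)
  have hle : ∀ p : n × n, A p.1 p.2 * (W p.1 * W p.2) ≤ A p.1 p.2 * (V p.1 * V p.2) :=
    fun ⟨i, k⟩ => mul_le_mul_of_nonpos_left (hVW i k) (hA i k).le
  rw [dotProduct_mulVec_self_eq_sum, dotProduct_mulVec_self_eq_sum, eq_comm,
    Finset.sum_eq_sum_iff_of_le fun p _ => hle p] at heq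
  exact fun i k => (mul_left_cancel₀ (hA i k).ne (heq (i, k) (Finset.mem_univ _))).symm

end Matrix

end

namespace Matrix.IsIrreducibleReal

variable {m : ℕ} {P : Matrix (Fin m) (Fin m) ℝ}

lemma neg (hP : P.IsIrreducibleReal) : (-P).IsIrreducibleReal := by
  simpa [IsIrreducibleReal] using hP

-- Otherwise the zero set of `x` would be a proper nonempty set of indices that `P` does not
-- connect to its complement.
lemma pos_of_mulVec_nonneg (hP : P.IsIrreducibleReal) (hoff : ∀ i j, i ≠ j → P i j ≤ 0)
    {x : Fin m → ℝ} (hx : 0 ≤ x) (hx0 : x ≠ 0) (hPx : 0 ≤ P *ᵥ x) (i : Fin m) : 0 < x i := by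
  refine (hx i).lt_of_ne fun hxi => hP ⟨{k | x k = 0}, ⟨i, hxi.symm⟩, ?_, ?_⟩
  · exact fun h => hx0 <| funext fun k => (h ▸ Set.mem_univ k : k ∈ {k | x k = 0})
  · intro a (ha : x a = 0) k (hk : x k ≠ 0)
    have hterm : ∀ l, P a l * x l ≤ 0 := fun l => by
      rcases eq_or_ne a l with rfl | hal
      · rw [ha, mul_zero]
      · exact mul_nonpos_of_nonpos_of_nonneg (hoff a l hal) (hx l)
    have hsum : ∑ l, P a l * x l = 0 := le_antisymm (Finset.sum_nonpos fun l _ => hterm l) (hPx a)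
    exact (mul_eq_zero.mp <| (Finset.sum_eq_zero_iff_of_nonpos fun l _ => hterm l).mp hsum k
      (Finset.mem_univ k)).resolve_right hk

lemma inv_pos_of_posDef (hP : P.IsIrreducibleReal) (hPd : P.PosDef)
    (hoff : ∀ i j, i ≠ j → P i j ≤ 0) (i j : Fin m) : 0 < P⁻¹ i j := by
  have hcol : P *ᵥ P⁻¹.col j = Pi.single j 1 := by
    rw [← mulVec_single_one, mulVec_mulVec,
      mul_nonsing_inv P ((isUnit_iff_isUnit_det P).mp hPd.isUnit), one_mulVec]
  have hsingle : (0 : Fin m → ℝ) ≤ Pi.single j 1 := Pi.single_nonneg.mpr zero_le_one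
  refine hP.pos_of_mulVec_nonneg hoff (x := P⁻¹.col j) ?_ ?_ (hcol ▸ hsingle) i
  · exact hPd.nonneg_of_mulVec_nonneg hoff (hcol ▸ hsingle)
  · intro h
    simpa [h] using congrFun hcol j

end Matrix.IsIrreducibleReal

theorem stmt_1_general (m : ℕ) (Q : Matrix (Fin m) (Fin m) ℝ)
    (hsym : Q.IsSymm)
    (hnegdef : ∀ V : Fin m → ℝ, V ≠ 0 → V ⬝ᵥ Q.mulVec V < 0)
    (hirr : Q.IsIrreducibleReal)
    (hoff : ∀ i j : Fin m, i ≠ j → 0 ≤ Q i j)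
    (W : Fin m → ℝ) (hW : ∀ i, 0 ≤ W i)
    (V : Fin m → ℝ) (hV : ∀ i, |V i| ≤ W i)
    (heq : V ⬝ᵥ (Q⁻¹).mulVec V = W ⬝ᵥ (Q⁻¹).mulVec W) :
    V = W ∨ V = -W := by
  have hposdef : (-Q).PosDef :=
    .of_dotProduct_mulVec_pos (isHermitian_iff_isSymm.mpr hsym.neg) fun x hx => by
      simpa [neg_mulVec] using hnegdef x hx
  have hunit : IsUnit (-Q).det := (isUnit_iff_isUnit_det _).mp hposdef.isUnit
  have hinv : Q⁻¹ = -(-Q)⁻¹ := inv_eq_left_inv <| by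
    rw [neg_mul_comm, nonsing_inv_mul _ hunit]
  have hneg : ∀ i j, Q⁻¹ i j < 0 := fun i j => by
    simpa [hinv] using hirr.neg.inv_pos_of_posDef hposdef
      (fun i j hij => neg_nonpos.mpr (hoff i j hij)) i j
  exact eq_or_eq_neg_of_forall_mul_eq hW
    (forall_mul_eq_of_dotProduct_mulVec_eq hneg hW hV heq)

theorem stmt_1 (m : ℕ) (hm : 0 < m) (Q : Matrix (Fin m) (Fin m) ℝ)
    (hsym : Q.IsSymm)
    (hnegdef : ∀ V : Fin m → ℝ, V ≠ 0 → V ⬝ᵥ Q.mulVec V < 0)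
    (hirr : Q.IsIrreducibleReal)
    (hoff : ∀ i j : Fin m, i ≠ j → 0 ≤ Q i j)
    (W : Fin m → ℝ) (hW : ∀ i, 0 ≤ W i)
    (V : Fin m → ℝ) (hV : ∀ i, |V i| ≤ W i)
    (heq : V ⬝ᵥ (Q⁻¹).mulVec V = W ⬝ᵥ (Q⁻¹).mulVec W) :
    V = W ∨ V = -W :=
  stmt_1_general m Q hsym hnegdef hirr hoff W hW V hV heq
end

section
/- Let m be a positive integer and let A be an m×m real symmetric matrix all of whose entries are strictly negative. Fix W ∈ ℝ^m with all entries nonnegative. Then for every V ∈ ℝ^m satisfying |V i| ≤ W i for every index i, one has Wᵀ A W ≤ Vᵀ A V; moreover, if Wᵀ A W = Vᵀ A V then V = W or V = −W. -/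
/-!
Since `A` is symmetric, `Wᵀ A W − Vᵀ A V = (W + V)ᵀ A (W − V)`. The bound `|V| ≤ W` makes both
`W + V` and `W − V` entrywise nonnegative, and a bilinear form with strictly negative entries is
nonpositive on nonnegative vectors, strictly negative unless one of them vanishes.
-/

open Matrix

section Symmetric

variable {n R : Type*} [Fintype n] [CommRing R]

theorem Matrix.IsSymm.dotProduct_mulVec_comm {A : Matrix n n R} (hA : A.IsSymm) (v w : n → R) :
    v ⬝ᵥ A *ᵥ w = w ⬝ᵥ A *ᵥ v := by
  rw [dotProduct_mulVec, dotProduct_comm, ← vecMul_transpose, hA.eq]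

theorem Matrix.IsSymm.dotProduct_mulVec_sub_dotProduct_mulVec {A : Matrix n n R} (hA : A.IsSymm)
    (w v : n → R) : w ⬝ᵥ A *ᵥ w - v ⬝ᵥ A *ᵥ v = (w + v) ⬝ᵥ A *ᵥ (w - v) := by
  simp only [mulVec_sub, dotProduct_sub, add_dotProduct, hA.dotProduct_mulVec_comm v w]
  ring

end Symmetric

section NegativeEntries

variable {n R : Type*} [Fintype n] [CommRing R] [LinearOrder R] [IsStrictOrderedRing R]

theorem dotProduct_neg_of_nonneg_of_ne_zero {x z : n → R} (hx : 0 ≤ x) (hx₀ : x ≠ 0)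
    (hz : ∀ i, z i < 0) : x ⬝ᵥ z < 0 := by
  obtain ⟨i, hi⟩ := Function.ne_iff.mp hx₀
  exact Finset.sum_neg' (fun j _ => mul_nonpos_of_nonneg_of_nonpos (hx j) (hz j).le)
    ⟨i, Finset.mem_univ i, mul_neg_of_pos_of_neg (lt_of_le_of_ne (hx i) (Ne.symm hi)) (hz i)⟩

theorem dotProduct_mulVec_neg_of_entries_neg {A : Matrix n n R} (hA : ∀ i j, A i j < 0)
    {x y : n → R} (hx : 0 ≤ x) (hx₀ : x ≠ 0) (hy : 0 ≤ y) (hy₀ : y ≠ 0) :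
    x ⬝ᵥ A *ᵥ y < 0 :=
  dotProduct_neg_of_nonneg_of_ne_zero hx hx₀ fun i => by
    rw [mulVec, dotProduct_comm]
    exact dotProduct_neg_of_nonneg_of_ne_zero hy hy₀ (hA i)

theorem dotProduct_mulVec_nonpos_of_entries_neg {A : Matrix n n R} (hA : ∀ i j, A i j < 0)
    {x y : n → R} (hx : 0 ≤ x) (hy : 0 ≤ y) : x ⬝ᵥ A *ᵥ y ≤ 0 := by
  rcases eq_or_ne x 0 with rfl | hx₀
  · simp
  rcases eq_or_ne y 0 with rfl | hy₀
  · simp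
  exact (dotProduct_mulVec_neg_of_entries_neg hA hx hx₀ hy hy₀).le

end NegativeEntries

theorem stmt_2_general (m : ℕ) (A : Matrix (Fin m) (Fin m) ℝ)
    (hsym : A.IsSymm)
    (hneg : ∀ i j : Fin m, A i j < 0)
    (W : Fin m → ℝ)
    (V : Fin m → ℝ) (hV : ∀ i, |V i| ≤ W i) :
    W ⬝ᵥ A.mulVec W ≤ V ⬝ᵥ A.mulVec V ∧
      (W ⬝ᵥ A.mulVec W = V ⬝ᵥ A.mulVec V → V = W ∨ V = -W) := by
  have hsum : 0 ≤ W + V := fun i => neg_le_iff_add_nonneg'.mp (abs_le.mp (hV i)).1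
  have hdiff : 0 ≤ W - V := fun i => sub_nonneg.mpr (abs_le.mp (hV i)).2
  have hkey := hsym.dotProduct_mulVec_sub_dotProduct_mulVec W V
  refine ⟨sub_nonpos.mp (hkey ▸ dotProduct_mulVec_nonpos_of_entries_neg hneg hsum hdiff),
    fun heq => ?_⟩
  by_contra! hne
  have hsum₀ : W + V ≠ 0 := fun h => hne.2 (eq_neg_of_add_eq_zero_right h)
  have hdiff₀ : W - V ≠ 0 := fun h => hne.1 (sub_eq_zero.mp h).symm
  have := dotProduct_mulVec_neg_of_entries_neg hneg hsum hsum₀ hdiff hdiff₀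
  rw [← hkey, heq, sub_self] at this
  exact lt_irrefl 0 this

theorem stmt_2 (m : ℕ) (hm : 0 < m) (A : Matrix (Fin m) (Fin m) ℝ)
    (hsym : A.IsSymm)
    (hneg : ∀ i j : Fin m, A i j < 0)
    (W : Fin m → ℝ) (hW : ∀ i, 0 ≤ W i)
    (V : Fin m → ℝ) (hV : ∀ i, |V i| ≤ W i) :
    W ⬝ᵥ A.mulVec W ≤ V ⬝ᵥ A.mulVec V ∧
      (W ⬝ᵥ A.mulVec W = V ⬝ᵥ A.mulVec V → V = W ∨ V = -W) :=
  stmt_2_general m A hsym hneg W V hV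
end

section
/- Let m be a positive integer and let Q be an m×m real symmetric matrix that is negative definite, irreducible, and has nonnegative off-diagonal entries (Q i j ≥ 0 for all i ≠ j). Then every entry of the inverse matrix Q⁻¹ is strictly negative. -/
open Matrix

/-!
Write `x` for the `j`-th column of `-Q⁻¹`, so that `Q x = -e_j ≤ 0`.
Minimum principle: if `Q x ≤ 0`, pair `Q x` with the negative part `x⁻`; since `x⁺` and `x⁻` have
disjoint supports and `Q` is nonnegative off the diagonal, `x⁻ ⬝ Q x⁺ ≥ 0`, hence
`x⁻ ⬝ Q x⁻ ≥ -(x⁻ ⬝ Q x) ≥ 0`, and negative definiteness forces `x⁻ = 0`.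
Strict positivity: if the zero set `S` of `x ≥ 0` were nonempty, then for `a ∈ S` the row
`(Q x) a = ∑ Q a l x l` is a sum of nonnegative terms that is `≤ 0`, so `Q a b = 0` whenever
`x b > 0`, and `S` would contradict irreducibility.
-/

namespace Matrix

variable {ι : Type*} [Fintype ι]

lemma isUnit_det_of_dotProduct_mulVec_neg_s3 [DecidableEq ι] {Q : Matrix ι ι ℝ}
    (hQ : ∀ v : ι → ℝ, v ≠ 0 → v ⬝ᵥ Q *ᵥ v < 0) : IsUnit Q.det := by
  refine (isUnit_iff_isUnit_det Q).mp (mulVec_injective_iff_isUnit.mp fun u v huv ↦ ?_)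
  by_contra hne
  have := hQ (u - v) (sub_ne_zero.mpr hne)
  rw [mulVec_sub, huv, sub_self, dotProduct_zero] at this
  exact lt_irrefl 0 this

lemma dotProduct_mulVec_nonneg_of_disjoint {Q : Matrix ι ι ℝ}
    (hoff : ∀ i j, i ≠ j → 0 ≤ Q i j) {u w : ι → ℝ} (hu : 0 ≤ u) (hw : 0 ≤ w)
    (huw : ∀ k, u k * w k = 0) : 0 ≤ u ⬝ᵥ Q *ᵥ w := by
  simp only [dotProduct, mulVec, Finset.mul_sum]
  refine Finset.sum_nonneg fun k _ ↦ Finset.sum_nonneg fun l _ ↦ ?_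
  rcases eq_or_ne k l with rfl | hkl
  · rw [mul_left_comm, huw, mul_zero]
  · exact mul_nonneg (hu k) (mul_nonneg (hoff k l hkl) (hw l))

lemma nonneg_of_mulVec_nonpos {Q : Matrix ι ι ℝ}
    (hQ : ∀ v : ι → ℝ, v ≠ 0 → v ⬝ᵥ Q *ᵥ v < 0) (hoff : ∀ i j, i ≠ j → 0 ≤ Q i j)
    {x : ι → ℝ} (hx : Q *ᵥ x ≤ 0) : 0 ≤ x := by
  have hdisj : ∀ k, x⁻ k * x⁺ k = 0 := fun k ↦ by
    rcases le_total 0 (x k) with h | h <;> simp [h]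
  have hcross : 0 ≤ x⁻ ⬝ᵥ Q *ᵥ x⁺ :=
    dotProduct_mulVec_nonneg_of_disjoint hoff (negPart_nonneg x) (posPart_nonneg x) hdisj
  have hpair : x⁻ ⬝ᵥ Q *ᵥ x ≤ 0 := by
    simpa [dotProduct_neg] using dotProduct_nonneg_of_nonneg (negPart_nonneg x) (neg_nonneg.2 hx)
  have hsplit : x⁻ ⬝ᵥ Q *ᵥ x = x⁻ ⬝ᵥ Q *ᵥ x⁺ - x⁻ ⬝ᵥ Q *ᵥ x⁻ := by
    rw [← dotProduct_sub, ← mulVec_sub, posPart_sub_negPart]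
  rw [← negPart_eq_zero]
  by_contra hne
  linarith [hQ _ hne]

lemma IsIrreducibleReal.pos_of_mulVec_nonpos {m : ℕ} {Q : Matrix (Fin m) (Fin m) ℝ}
    (hirr : Q.IsIrreducibleReal) (hoff : ∀ i j, i ≠ j → 0 ≤ Q i j) {x : Fin m → ℝ}
    (hx : 0 ≤ x) (hx0 : x ≠ 0) (hQx : Q *ᵥ x ≤ 0) (i : Fin m) : 0 < x i := by
  refine (hx i).lt_of_ne fun hxi ↦ hirr ⟨{k | x k = 0}, ⟨i, hxi.symm⟩, ?_, fun a ha b hb ↦ ?_⟩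
  · exact fun hS ↦ hx0 (funext fun k ↦ (hS ▸ Set.mem_univ k : k ∈ {k | x k = 0}))
  have hterm : ∀ l ∈ Finset.univ, 0 ≤ Q a l * x l := fun l _ ↦ by
    rcases eq_or_ne a l with rfl | hal
    · simp [show x a = 0 from ha]
    · exact mul_nonneg (hoff a l hal) (hx l)
  have hrow : ∑ l, Q a l * x l = 0 :=
    le_antisymm (hQx a) (Finset.sum_nonneg hterm)
  exact (mul_eq_zero.mp ((Finset.sum_eq_zero_iff_of_nonneg hterm).mp hrow b
    (Finset.mem_univ b))).resolve_right hb

end Matrix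

theorem stmt_3_general (m : ℕ) (Q : Matrix (Fin m) (Fin m) ℝ)
    (hnegdef : ∀ V : Fin m → ℝ, V ≠ 0 → V ⬝ᵥ Q.mulVec V < 0)
    (hirr : Q.IsIrreducibleReal)
    (hoff : ∀ i j : Fin m, i ≠ j → 0 ≤ Q i j) :
    ∀ i j : Fin m, Q⁻¹ i j < 0 := by
  intro i j
  have hdet := isUnit_det_of_dotProduct_mulVec_neg_s3 hnegdef
  set x : Fin m → ℝ := -(Q⁻¹ *ᵥ Pi.single j 1) with hx
  have hQx : Q *ᵥ x = -Pi.single j 1 := by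
    rw [hx, mulVec_neg, mulVec_mulVec, mul_nonsing_inv Q hdet, one_mulVec]
  have hQx_nonpos : Q *ᵥ x ≤ 0 := by
    rw [hQx]
    exact neg_nonpos.2 (Pi.single_nonneg.2 zero_le_one)
  have hx0 : x ≠ 0 := fun h ↦ by simpa [h] using congr_fun hQx j
  have hpos := hirr.pos_of_mulVec_nonpos hoff (nonneg_of_mulVec_nonpos hnegdef hoff hQx_nonpos)
    hx0 hQx_nonpos i
  simpa [hx, mulVec_single_one] using hpos

theorem stmt_3 (m : ℕ) (hm : 0 < m) (Q : Matrix (Fin m) (Fin m) ℝ)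
    (hsym : Q.IsSymm)
    (hnegdef : ∀ V : Fin m → ℝ, V ≠ 0 → V ⬝ᵥ Q.mulVec V < 0)
    (hirr : Q.IsIrreducibleReal)
    (hoff : ∀ i j : Fin m, i ≠ j → 0 ≤ Q i j) :
    ∀ i j : Fin m, Q⁻¹ i j < 0 :=
  stmt_3_general m Q hnegdef hirr hoff
end
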